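/- Let S₁ ⊂ ℝ^{N₁}, S₂ ⊂ ℝ^{N₂} be open sets, η ∈ M_b⁺(S₁), and let x₁ ↦ μ_{x₁} ∈ M_b(S₂;ℝ^M) be an η-measurable family with disintegration μ = η ⊗_gen μ_{x₁} ∈ M_b(S₁×S₂;ℝ^M) and |μ| = η ⊗_gen |μ_{x₁}|. Then for η-a.e. x₁ ∈ S₁, the Radon–Nikodym derivative satisfies (dμ/d|μ|)(x₁,·) = dμ_{x₁}/d|μ_{x₁}| at |μ_{x₁}|-a.e. point of S₂. -/
import Mathlib


open MeasureTheory
open scoped BigOperators ENNReal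
open ProbabilityTheory

set_option maxHeartbeats 1000000 in
/-- compatibility of polar (Radon–Nikodym) densities with
disintegration.  An `ℝ^M`-valued measure `μ` on `S₁ × S₂` is encoded by its total
variation measure `ν` together with its polar density `f = dμ/d|μ|`; the
disintegrated measures `μ_{x₁}` are encoded by variations `νx x₁` and polars
`fx x₁`.  The hypotheses state `|μ| = η ⊗_gen |μ_{x₁}|` and
`μ = η ⊗_gen μ_{x₁}`.  The conclusion is that for `η`-a.e. `x₁`,
`(dμ/d|μ|)(x₁,·) = dμ_{x₁}/d|μ_{x₁}|` at `|μ_{x₁}|`-a.e. point of `S₂`. -/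
theorem polar_of_disintegration
    {N₁ N₂ M : ℕ}
    (S₁ : Set (EuclideanSpace ℝ (Fin N₁))) (S₂ : Set (EuclideanSpace ℝ (Fin N₂)))
    (hS₁ : IsOpen S₁) (hS₂ : IsOpen S₂)
    (η : Measure S₁) [IsFiniteMeasure η]
    (ν : Measure (S₁ × S₂)) [IsFiniteMeasure ν]
    (νx : S₁ → Measure S₂) (hνx_fin : ∀ x₁, IsFiniteMeasure (νx x₁))
    (f : S₁ × S₂ → (Fin M → ℝ)) (hf : Measurable f)
    (hf_polar : ∀ᵐ p ∂ν, ‖f p‖ = 1)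
    (fx : S₁ → S₂ → (Fin M → ℝ)) (hfx : ∀ x₁, Measurable (fx x₁))
    (hfx_meas : Measurable fun p : S₁ × S₂ => fx p.1 p.2)
    (hfx_polar : ∀ᵐ x₁ ∂η, ∀ᵐ x₂ ∂(νx x₁), ‖fx x₁ x₂‖ = 1)
    (hνx_kernel : ∀ A : Set S₂, MeasurableSet A → Measurable fun x₁ => νx x₁ A)
    -- `|μ| = η ⊗_gen |μ_{x₁}|`
    (hvar : ∀ A : Set (S₁ × S₂), MeasurableSet A →
      ν A = ∫⁻ x₁, νx x₁ {x₂ | (x₁, x₂) ∈ A} ∂η)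
    -- `μ = η ⊗_gen μ_{x₁}`
    (hdis : ∀ A : Set (S₁ × S₂), MeasurableSet A →
      (∫ p in A, f p ∂ν) =
        ∫ x₁, (∫ x₂ in {x₂ | (x₁, x₂) ∈ A}, fx x₁ x₂ ∂(νx x₁)) ∂η) :
    ∀ᵐ x₁ ∂η, ∀ᵐ x₂ ∂(νx x₁), f (x₁, x₂) = fx x₁ x₂ := by
  classical
  have hmeasνx : Measurable νx := Measure.measurable_of_measurable_coe _ hνx_kernel
  let κ : Kernel S₁ S₂ := ⟨νx, hmeasνx⟩
  have hκapp : ∀ x, κ x = νx x := fun x => rfl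
  have hmeas_univ : Measurable fun x₁ => νx x₁ Set.univ := hνx_kernel _ MeasurableSet.univ
  -- s-finiteness of κ
  let B : ℕ → Set S₁ := fun n => (fun x => νx x Set.univ) ⁻¹' (Set.Ico (n : ℝ≥0∞) (n + 1))
  have hB : ∀ n, MeasurableSet (B n) := fun n => hmeas_univ measurableSet_Ico
  haveI hκsfin : IsSFiniteKernel κ := by
    refine ⟨⟨fun n => Kernel.piecewise (hB n) κ 0, fun n => ?_, ?_⟩⟩
    · refine ⟨⟨(n : ℝ≥0∞) + 1, by simp [ENNReal.add_lt_top], fun x => ?_⟩⟩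
      rw [Kernel.piecewise_apply]
      split_ifs with h
      · exact (h.2 : νx x Set.univ < (n : ℝ≥0∞) + 1).le
      · simp
    · ext x s hs
      rw [Kernel.sum_apply' _ _ hs]
      haveI := hνx_fin x
      have hrt : νx x Set.univ ≠ ⊤ := (measure_lt_top _ _).ne
      set t : ℝ := (νx x Set.univ).toReal with ht
      have ht0 : 0 ≤ t := ENNReal.toReal_nonneg
      set n₀ : ℕ := ⌊t⌋₊ with hn₀
      have hmem : x ∈ B n₀ := by
        refine ⟨?_, ?_⟩
        · show (n₀ : ℝ≥0∞) ≤ νx x Set.univ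
          rw [← ENNReal.ofReal_toReal hrt, ← ENNReal.ofReal_natCast]
          exact ENNReal.ofReal_le_ofReal (Nat.floor_le ht0)
        · show νx x Set.univ < (n₀ : ℝ≥0∞) + 1
          rw [← ENNReal.ofReal_toReal hrt]
          calc ENNReal.ofReal t < ENNReal.ofReal ((n₀ : ℝ) + 1) :=
                (ENNReal.ofReal_lt_ofReal_iff (by positivity)).mpr (Nat.lt_floor_add_one t)
            _ ≤ (n₀ : ℝ≥0∞) + 1 := by
                rw [ENNReal.ofReal_add (by positivity) zero_le_one]
                simp [ENNReal.ofReal_natCast]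
      have hsum : ∀ m, m ≠ n₀ → (Kernel.piecewise (hB m) κ 0) x s = 0 := by
        intro m hm
        rw [Kernel.piecewise_apply]
        split_ifs with h
        · exfalso
          rcases lt_or_gt_of_ne hm with hlt | hlt
          · exact absurd hmem.1 (not_le.mpr (lt_of_lt_of_le h.2 (by
              exact_mod_cast Nat.cast_le.mpr (by omega : m + 1 ≤ n₀))))
          · exact absurd h.1 (not_le.mpr (lt_of_lt_of_le hmem.2 (by
              exact_mod_cast Nat.cast_le.mpr (by omega : n₀ + 1 ≤ m))))
        · simp
      rw [tsum_eq_single n₀ hsum, Kernel.piecewise_apply, if_pos hmem]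
  -- identify ν with the comp-prod
  have hν : ν = η.compProd κ := by
    ext A hA
    rw [Measure.compProd_apply hA, hvar A hA]
    rfl
  -- integrability
  have hf_int : Integrable f ν :=
    (integrable_const (1 : ℝ)).mono' hf.aestronglyMeasurable
      (hf_polar.mono fun p hp => by simp [hp])
  have hfx_setmeas : MeasurableSet {p : S₁ × S₂ | ‖fx p.1 p.2‖ = 1} :=
    hfx_meas.norm (measurableSet_singleton (1 : ℝ))
  have hfxν : ∀ᵐ p ∂ν, ‖fx p.1 p.2‖ = 1 := by
    rw [hν]
    exact Measure.ae_compProd_of_ae_ae hfx_setmeas hfx_polar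
  have hfx_int : Integrable (fun p : S₁ × S₂ => fx p.1 p.2) ν :=
    (integrable_const (1 : ℝ)).mono' hfx_meas.aestronglyMeasurable
      (hfxν.mono fun p hp => by simp [hp])
  -- key set-integral equality
  have key : ∀ A : Set (S₁ × S₂), MeasurableSet A →
      ∫ p in A, f p ∂ν = ∫ p in A, fx p.1 p.2 ∂ν := by
    intro A hA
    rw [hdis A hA]
    have hind : Integrable (A.indicator fun p : S₁ × S₂ => fx p.1 p.2) (η.compProd κ) := by
      rw [← hν]; exact hfx_int.indicator hA
    have h1 : ∀ x₁, (∫ x₂ in {x₂ | (x₁, x₂) ∈ A}, fx x₁ x₂ ∂(νx x₁)) =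
        ∫ x₂, (A.indicator fun p : S₁ × S₂ => fx p.1 p.2) (x₁, x₂) ∂(κ x₁) := by
      intro x₁
      have hsl : MeasurableSet {x₂ | (x₁, x₂) ∈ A} := measurable_prodMk_left hA
      rw [← integral_indicator hsl]
      rfl
    calc ∫ x₁, (∫ x₂ in {x₂ | (x₁, x₂) ∈ A}, fx x₁ x₂ ∂(νx x₁)) ∂η
        = ∫ x₁, ∫ x₂, (A.indicator fun p : S₁ × S₂ => fx p.1 p.2) (x₁, x₂) ∂(κ x₁) ∂η :=
          integral_congr_ae (Filter.Eventually.of_forall h1)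
      _ = ∫ p, (A.indicator fun p : S₁ × S₂ => fx p.1 p.2) p ∂(η.compProd κ) :=
          (Measure.integral_compProd hind).symm
      _ = ∫ p in A, fx p.1 p.2 ∂ν := by rw [← hν, integral_indicator hA]
  have hae : f =ᵐ[ν] fun p : S₁ × S₂ => fx p.1 p.2 :=
    ae_eq_of_forall_setIntegral_eq_of_sigmaFinite
      (fun s hs _ => hf_int.integrableOn)
      (fun s hs _ => hfx_int.integrableOn)
      (fun s hs _ => key s hs)
  have hae' : ∀ᵐ p ∂(η.compProd κ), f p = fx p.1 p.2 := hν ▸ hae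
  exact Measure.ae_ae_of_ae_compProd hae'
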